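/- Let f : ℝ^d → ℝ be M-strongly convex with ρ-Lipschitz Hessian, minimized at x*. For any x_B, let x̃ = x_B − (∇²f(x_B))^{−1}∇f(x_B) and f̃(x) = ½(x − x̃)ᵀ∇²f(x_B)(x − x̃). Then f̃(x_B) ≤ max{ 2(f(x_B) − f(x*)), (8ρ/(3M^{3/2}))·(f(x_B) − f(x*))^{3/2} }. -/

import Mathlib

open scoped RealInnerProductSpace

/-- Frobenius norm of a continuous linear operator on `EuclideanSpace ℝ (Fin d)`,
computed in the standard orthonormal basis. -/
noncomputable def frobNorm {d : ℕ}
    (A : EuclideanSpace ℝ (Fin d) →L[ℝ] EuclideanSpace ℝ (Fin d)) : ℝ :=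
  Real.sqrt (∑ i, ∑ j, (A (EuclideanSpace.single j 1) i) ^ 2)

/-!
Put `v = x_B − x̃` and `q = ⟪v, ∇²f(x_B) v⟫ = 2 f̃(x_B)`. Since `∇²f(x_B) v = ∇f(x_B)`, the cubic
Taylor bound for a `ρ`-Lipschitz Hessian along the Newton direction gives, for every step
`η ∈ [0, 1]`,
`f(x_B) − f(x*) ≥ f(x_B) − f(x_B − η v) ≥ q η − q η² / 2 − ρ ‖v‖³ η³ / 6`,
and strong convexity gives `‖v‖ ≤ √(q / M)`. The full step `η = 1` yields the linear bound
when `ρ √q / M^{3/2} ≤ 3/2`; otherwise the step `η = (ρ √q / M^{3/2})^{-1/2}` yields the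
`3/2`-power bound.
-/

open Set

theorem opNorm_le_frobNorm {d : ℕ}
    (A : EuclideanSpace ℝ (Fin d) →L[ℝ] EuclideanSpace ℝ (Fin d)) : ‖A‖ ≤ frobNorm A := by
  have hfrob : frobNorm A = √(∑ j, ‖A (EuclideanSpace.single j 1)‖ ^ 2) := by
    simp only [frobNorm, EuclideanSpace.real_norm_sq_eq]
    rw [Finset.sum_comm]
  refine A.opNorm_le_bound (by rw [frobNorm]; positivity) fun w => ?_
  have hw : w = ∑ j, w j • EuclideanSpace.single j (1 : ℝ) := by
    simpa [EuclideanSpace.basisFun_apply] using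
      ((EuclideanSpace.basisFun (Fin d) ℝ).sum_repr w).symm
  calc ‖A w‖ = ‖∑ j, w j • A (EuclideanSpace.single j 1)‖ := by
        conv_lhs => rw [hw]
        simp only [map_sum, map_smul]
    _ ≤ ∑ j, ‖w j‖ * ‖A (EuclideanSpace.single j 1)‖ :=
        (norm_sum_le _ _).trans_eq (by simp only [norm_smul])
    _ ≤ √(∑ j, ‖w j‖ ^ 2) * √(∑ j, ‖A (EuclideanSpace.single j 1)‖ ^ 2) :=
        Real.sum_mul_le_sqrt_mul_sqrt _ _ _
    _ = frobNorm A * ‖w‖ := by rw [hfrob, EuclideanSpace.norm_eq, mul_comm]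

theorem le_of_hasDerivAt_le {g g' G G' : ℝ → ℝ} {a b : ℝ}
    (hg : ∀ t, HasDerivAt g (g' t) t) (hG : ∀ t, HasDerivAt G (G' t) t) (ha : g a ≤ G a)
    (h : ∀ t ∈ Ico a b, g' t ≤ G' t) : ∀ ⦃t⦄, t ∈ Icc a b → g t ≤ G t :=
  image_le_of_deriv_right_le_deriv_boundary
    (HasDerivAt.continuousOn fun t _ => hg t) (fun t _ => (hg t).hasDerivWithinAt) ha
    (HasDerivAt.continuousOn fun t _ => hG t) (fun t _ => (hG t).hasDerivWithinAt) h

theorem hasDerivAt_cubic (c₀ c₁ c₂ c₃ t : ℝ) :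
    HasDerivAt (fun s => c₀ + c₁ * s + c₂ * s ^ 2 / 2 + c₃ * s ^ 3 / 6)
      (c₁ + c₂ * t + c₃ * t ^ 2 / 2) t := by
  refine (((((hasDerivAt_id' t).const_mul c₁).const_add c₀).fun_add
      (((hasDerivAt_pow 2 t).const_mul c₂).div_const 2)).fun_add
      (((hasDerivAt_pow 3 t).const_mul c₃).div_const 6)).congr_deriv ?_
  norm_num
  ring

theorem le_taylor_cubic_of_deriv2_le {φ φ' φ'' : ℝ → ℝ} {b : ℝ}
    (hφ : ∀ t, HasDerivAt φ (φ' t) t) (hφ' : ∀ t, HasDerivAt φ' (φ'' t) t)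
    (hb : ∀ t ∈ Icc (0 : ℝ) 1, φ'' t ≤ φ'' 0 + b * t) :
    φ 1 ≤ φ 0 + φ' 0 + φ'' 0 / 2 + b / 6 := by
  have hφ'_le (t : ℝ) (ht : t ∈ Icc (0 : ℝ) 1) : φ' t ≤ φ' 0 + φ'' 0 * t + b * t ^ 2 / 2 := by
    simpa using le_of_hasDerivAt_le hφ' (hasDerivAt_cubic (φ' 0) (φ'' 0) b 0) (by simp)
      (fun s hs => by simpa using hb s (Ico_subset_Icc_self hs)) ht
  simpa using le_of_hasDerivAt_le hφ (hasDerivAt_cubic (φ 0) (φ' 0) (φ'' 0) b) (by simp)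
    (fun t ht => hφ'_le t (Ico_subset_Icc_self ht)) (right_mem_Icc.2 zero_le_one)

section Hessian

variable {E : Type*} [NormedAddCommGroup E] [InnerProductSpace ℝ E] [CompleteSpace E]

theorem ContDiff.gradient {f : E → ℝ} {n : WithTop ℕ∞} (hf : ContDiff ℝ (n + 1) f) :
    ContDiff ℝ n (gradient f) :=
  (InnerProductSpace.toDual ℝ E).symm.toContinuousLinearEquiv.contDiff.comp
    (hf.fderiv_right le_rfl)

theorem le_add_inner_gradient_add_hessian_add_cube {f : E → ℝ} {ρ : ℝ}
    (hf : Differentiable ℝ f) (hgf : Differentiable ℝ (gradient f))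
    (hLip : ∀ x y, ‖fderiv ℝ (gradient f) x - fderiv ℝ (gradient f) y‖ ≤ ρ * ‖x - y‖)
    (x w : E) :
    f (x + w) ≤ f x + ⟪gradient f x, w⟫ + ⟪w, fderiv ℝ (gradient f) x w⟫ / 2
      + ρ * ‖w‖ ^ 3 / 6 := by
  set H := fderiv ℝ (gradient f)
  have hline (t : ℝ) : HasDerivAt (fun s : ℝ => x + s • w) w t := by
    simpa using ((hasDerivAt_id t).smul_const w).const_add x
  have hφ (t : ℝ) : HasDerivAt (fun s => f (x + s • w)) ⟪gradient f (x + t • w), w⟫ t := by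
    rw [inner_gradient_left]
    exact (hf _).hasFDerivAt.comp_hasDerivAt t (hline t)
  have hφ' (t : ℝ) :
      HasDerivAt (fun s => ⟪gradient f (x + s • w), w⟫) ⟪w, H (x + t • w) w⟫ t := by
    rw [real_inner_comm]
    simpa using ((hgf _).hasFDerivAt.comp_hasDerivAt t (hline t)).inner ℝ (hasDerivAt_const t w)
  have hb (t : ℝ) (ht : t ∈ Icc (0 : ℝ) 1) :
      ⟪w, H (x + t • w) w⟫ ≤ ⟪w, H (x + (0 : ℝ) • w) w⟫ + ρ * ‖w‖ ^ 3 * t := by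
    have hH : ‖H (x + t • w) - H x‖ ≤ ρ * (t * ‖w‖) := by
      simpa [norm_smul, abs_of_nonneg ht.1] using hLip (x + t • w) x
    calc ⟪w, H (x + t • w) w⟫ = ⟪w, H x w⟫ + ⟪w, (H (x + t • w) - H x) w⟫ := by
          rw [sub_apply, inner_sub_right]; ring
      _ ≤ ⟪w, H x w⟫ + ‖w‖ * (‖H (x + t • w) - H x‖ * ‖w‖) := by
          gcongr
          exact (real_inner_le_norm _ _).trans (by gcongr; exact ContinuousLinearMap.le_opNorm _ _)
      _ ≤ ⟪w, H x w⟫ + ‖w‖ * (ρ * (t * ‖w‖) * ‖w‖) := by gcongr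
      _ = ⟪w, H (x + (0 : ℝ) • w) w⟫ + ρ * ‖w‖ ^ 3 * t := by simp only [zero_smul, add_zero]; ring
  simpa using le_taylor_cubic_of_deriv2_le hφ hφ' hb

end Hessian

theorem half_sq_le_max_of_forall_cubic_le {c r Δ : ℝ} (hc : 0 ≤ c)
    (h : ∀ η ∈ Icc (0 : ℝ) 1, r ^ 2 * η - r ^ 2 * η ^ 2 / 2 - c * r ^ 3 * η ^ 3 / 6 ≤ Δ) :
    r ^ 2 / 2 ≤ max (2 * Δ) (8 * c / 3 * Δ ^ ((3 : ℝ) / 2)) := by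
  have hΔ : 0 ≤ Δ := by simpa using h 0 (left_mem_Icc.2 zero_le_one)
  rcases le_or_gt (c * r) (3 / 2) with hcr | hcr
  · refine le_max_of_le_left ?_
    have := h 1 (right_mem_Icc.2 zero_le_one)
    nlinarith [mul_le_mul_of_nonneg_right hcr (sq_nonneg r)]
  refine le_max_of_le_right ?_
  -- the step `η = (c r)^{-1/2}` makes the cubic term of the model comparable to the linear one
  set s := (√(c * r))⁻¹
  have hs0 : 0 < s := inv_pos.2 (Real.sqrt_pos.2 (by linarith))
  have hs : s ^ 2 * (c * r) = 1 := by
    rw [inv_pow, Real.sq_sqrt (by linarith), inv_mul_cancel₀ (by linarith)]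
  have hs1 : s ≤ 5 / 6 := by nlinarith
  have hΔs : 5 / 12 * r ^ 2 * s ≤ Δ := by
    have := h s ⟨hs0.le, by linarith⟩
    have hcube : c * r ^ 3 * s ^ 3 = r ^ 2 * s * (s ^ 2 * (c * r)) := by ring
    rw [hcube, hs] at this
    nlinarith [mul_nonneg (sq_nonneg r) hs0.le]
  have hcrs : 1 ≤ (c * r) ^ 2 * s ^ 3 := by nlinarith
  rw [Real.rpow_div_two_eq_sqrt _ hΔ, Real.rpow_ofNat]
  refine (pow_le_pow_iff_left₀ (by positivity) (by positivity) two_ne_zero).1 ?_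
  calc (r ^ 2 / 2) ^ 2 ≤ 64 / 9 * (125 / 1728) * r ^ 4 * ((c * r) ^ 2 * s ^ 3) := by
        nlinarith [sq_nonneg (r ^ 2)]
    _ = 64 / 9 * c ^ 2 * (5 / 12 * r ^ 2 * s) ^ 3 := by ring
    _ ≤ 64 / 9 * c ^ 2 * Δ ^ 3 := by gcongr
    _ = (8 * c / 3 * √Δ ^ 3) ^ 2 := by
        rw [mul_pow, ← pow_mul, mul_comm 3 2, pow_mul, Real.sq_sqrt hΔ]; ring

/-- For an `M`-strongly convex `f` with `ρ`-Lipschitz Hessian minimized at `x*`, with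
Newton target `x̃ = x_B − (∇²f(x_B))⁻¹∇f(x_B)` and quadratic model
`f̃(x) = ½⟪x − x̃, ∇²f(x_B)(x − x̃)⟫`, one has
`f̃(x_B) ≤ max { 2(f(x_B) − f(x*)), (8ρ/(3 M^{3/2})) (f(x_B) − f(x*))^{3/2} }`. -/
theorem stmt_17 {d : ℕ} (f : EuclideanSpace ℝ (Fin d) → ℝ) (M ρ : ℝ)
    (hM : 0 < M) (hρ : 0 < ρ)
    (hf : ContDiff ℝ 2 f)
    (hsc : ∀ x v : EuclideanSpace ℝ (Fin d),
      M * ‖v‖ ^ 2 ≤ ⟪v, fderiv ℝ (gradient f) x v⟫)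
    (hLip : ∀ x x' : EuclideanSpace ℝ (Fin d),
      frobNorm (fderiv ℝ (gradient f) x - fderiv ℝ (gradient f) x') ≤ ρ * ‖x - x'‖)
    (xstar : EuclideanSpace ℝ (Fin d)) (hmin : ∀ x, f xstar ≤ f x)
    (xB xtilde : EuclideanSpace ℝ (Fin d))
    (hxt : fderiv ℝ (gradient f) xB (xB - xtilde) = gradient f xB) :
    (1 / 2) * ⟪xB - xtilde, fderiv ℝ (gradient f) xB (xB - xtilde)⟫ ≤
      max (2 * (f xB - f xstar))
        ((8 * ρ / (3 * M ^ ((3 : ℝ) / 2))) * (f xB - f xstar) ^ ((3 : ℝ) / 2)) := by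
  set v := xB - xtilde
  set q := ⟪v, fderiv ℝ (gradient f) xB v⟫
  have hq : 0 ≤ q := (hsc xB v).trans' (by positivity)
  have hM32 : M ^ ((3 : ℝ) / 2) = √M ^ 3 := by rw [Real.rpow_div_two_eq_sqrt _ hM.le]; norm_cast
  have hv : √M * ‖v‖ ≤ √q := by
    rw [← Real.sqrt_sq (norm_nonneg v), ← Real.sqrt_mul hM.le]
    exact Real.sqrt_le_sqrt (hsc xB v)
  have hcube : ρ * ‖v‖ ^ 3 ≤ ρ / M ^ ((3 : ℝ) / 2) * √q ^ 3 := by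
    rw [hM32, div_mul_eq_mul_div, le_div_iff₀ (by positivity), mul_assoc, ← mul_pow, mul_comm ‖v‖]
    gcongr
  have hdescent (η : ℝ) (hη : η ∈ Icc (0 : ℝ) 1) :
      √q ^ 2 * η - √q ^ 2 * η ^ 2 / 2 - ρ / M ^ ((3 : ℝ) / 2) * √q ^ 3 * η ^ 3 / 6
        ≤ f xB - f xstar := by
    have htaylor := le_add_inner_gradient_add_hessian_add_cube (hf.differentiable two_ne_zero)
      ((hf.gradient (n := 1)).differentiable one_ne_zero)
      (fun x y => (opNorm_le_frobNorm _).trans (hLip x y)) xB (-η • v)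
    have hgrad : ⟪gradient f xB, v⟫ = q := by rw [← hxt, real_inner_comm]
    rw [real_inner_smul_right, hgrad, map_smul, real_inner_smul_left, real_inner_smul_right,
      ← show q = ⟪v, fderiv ℝ (gradient f) xB v⟫ from rfl, norm_smul, Real.norm_eq_abs, abs_neg,
      abs_of_nonneg hη.1] at htaylor
    rw [Real.sq_sqrt hq]
    nlinarith [hmin (xB + -η • v), mul_le_mul_of_nonneg_right hcube (pow_nonneg hη.1 3)]
  have hmax := half_sq_le_max_of_forall_cubic_le (by positivity) hdescent
  rw [Real.sq_sqrt hq] at hmax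
  convert hmax using 3 <;> ring
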